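/- Let {a_m}, {b_n} be orthonormal bases of ℂ^d with maximum overlap c = max_{m,n}|⟨a_m|b_n⟩|, and for a density matrix ρ let p, q be the induced probability vectors. Then the largest entry of p⊗q satisfies max_{m,n} p_m q_n ≤ (1/4)(1+c)², and taking Φ = H_∞ (min-entropy) this yields H_∞(p) + H_∞(q) ≥ −2 log₂((1+c)/2). -/

import Mathlib

open scoped Matrix.Norms.L2Operator ComplexOrder
open Matrix

/-- The min-entropy `H_∞(v) = −log₂ max_i v_i` of a probability vector. -/
noncomputable def minEntropy {ι : Type*} [Fintype ι] (v : ι → ℝ) : ℝ :=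
  -Real.logb 2 (⨆ i, v i)

/-!
For unit vectors `a`, `b` the operator `|a⟩⟨a| + |b⟩⟨b|` has largest eigenvalue `1 + |⟨a, b⟩|`,
so `p_m + q_n = tr (ρ (|a_m⟩⟨a_m| + |b_n⟩⟨b_n|)) ≤ 1 + c` for every density matrix `ρ`.
AM-GM then gives `p_m q_n ≤ ((1 + c) / 2) ^ 2`, and since `H_∞(p) + H_∞(q) = −log₂ (max p · max q)`
the entropic bound follows by taking the logarithm.
-/

open scoped InnerProductSpace MatrixOrder

theorem norm_inner_sq_add_norm_inner_sq_le {𝕜 E : Type*} [RCLike 𝕜] [NormedAddCommGroup E]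
    [InnerProductSpace 𝕜 E] {a b : E} (ha : ‖a‖ = 1) (hb : ‖b‖ = 1) (r : E) :
    ‖⟪a, r⟫_𝕜‖ ^ 2 + ‖⟪b, r⟫_𝕜‖ ^ 2 ≤ (1 + ‖⟪a, b⟫_𝕜‖) * ‖r‖ ^ 2 := by
  set α := ⟪a, r⟫_𝕜
  set β := ⟪b, r⟫_𝕜
  set s := ‖α‖ ^ 2 + ‖β‖ ^ 2
  set w := α • a + β • b
  have hwr : ⟪w, r⟫_𝕜 = s := by
    rw [inner_add_left, inner_smul_left, inner_smul_left, RCLike.conj_mul, RCLike.conj_mul]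
    simp only [s]; push_cast; rfl
  have hw : ‖w‖ ^ 2 ≤ (1 + ‖⟪a, b⟫_𝕜‖) * s := by
    have hcross : RCLike.re ⟪α • a, β • b⟫_𝕜 ≤ ‖α‖ * ‖β‖ * ‖⟪a, b⟫_𝕜‖ := by
      refine (RCLike.re_le_norm _).trans_eq ?_
      simp only [inner_smul_left, inner_smul_right, norm_mul, RCLike.norm_conj]; ring
    have hamgm := two_mul_le_add_sq ‖α‖ ‖β‖
    rw [norm_add_sq (𝕜 := 𝕜), norm_smul, norm_smul, ha, hb]
    nlinarith [norm_nonneg ⟪a, b⟫_𝕜]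
  -- Cauchy–Schwarz against the test vector `w`, which has `⟪w, r⟫ = s`.
  have hcs : s ≤ ‖w‖ * ‖r‖ := by
    simpa [hwr] using re_inner_le_norm (𝕜 := 𝕜) w r
  rcases (show 0 ≤ s by positivity).eq_or_lt with hs_zero | hs_pos
  · rw [← hs_zero]; positivity
  · refine le_of_mul_le_mul_left ?_ hs_pos
    calc s * s ≤ ‖w‖ ^ 2 * ‖r‖ ^ 2 := by nlinarith [norm_nonneg w, norm_nonneg r]
      _ ≤ (1 + ‖⟪a, b⟫_𝕜‖) * s * ‖r‖ ^ 2 := by gcongr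
      _ = s * ((1 + ‖⟪a, b⟫_𝕜‖) * ‖r‖ ^ 2) := by ring

namespace Matrix

variable {n 𝕜 : Type*} [Fintype n] [RCLike 𝕜]

theorem re_star_dotProduct_self (y : n → 𝕜) :
    RCLike.re (star y ⬝ᵥ y) = ∑ i, ‖y i‖ ^ 2 := by
  simp [dotProduct, RCLike.conj_mul]

theorem re_dotProduct_conjTranspose_mul_self_mulVec (B : Matrix n n 𝕜) (x : n → 𝕜) :
    RCLike.re (star x ⬝ᵥ (Bᴴ * B) *ᵥ x) =
      ∑ i, ‖⟪WithLp.toLp 2 (star (B i)), WithLp.toLp 2 x⟫_𝕜‖ ^ 2 := by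
  rw [← mulVec_mulVec, dotProduct_mulVec, ← star_mulVec, re_star_dotProduct_self]
  simp [EuclideanSpace.inner_toLp_toLp, mulVec, dotProduct_comm]

theorem re_trace_conjTranspose_mul_self (B : Matrix n n 𝕜) :
    RCLike.re (Bᴴ * B).trace = ∑ i, ‖WithLp.toLp 2 (star (B i))‖ ^ 2 := by
  simp only [trace, diag_apply, mul_apply, conjTranspose_apply, RCLike.star_def,
    RCLike.conj_mul, map_sum, RCLike.re_ofReal_pow, EuclideanSpace.norm_sq_eq, Pi.star_apply,
    RCLike.norm_conj]
  exact Finset.sum_comm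

theorem PosSemidef.re_dotProduct_mulVec_add_le {ρ : Matrix n n 𝕜} (hρ : ρ.PosSemidef)
    {a b : n → 𝕜} (ha : star a ⬝ᵥ a = 1) (hb : star b ⬝ᵥ b = 1) :
    RCLike.re (star a ⬝ᵥ ρ *ᵥ a) + RCLike.re (star b ⬝ᵥ ρ *ᵥ b) ≤
      (1 + ‖star a ⬝ᵥ b‖) * RCLike.re ρ.trace := by
  classical
  -- Writing `ρ = Bᴴ B` splits both sides into sums over the rows of `B`.
  obtain ⟨B, rfl⟩ := CStarAlgebra.nonneg_iff_eq_star_mul_self.mp hρ.nonneg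
  have hnorm {x : n → 𝕜} (hx : star x ⬝ᵥ x = 1) : ‖WithLp.toLp 2 x‖ = 1 := by
    have h := re_star_dotProduct_self x
    rw [hx, RCLike.one_re] at h
    rw [← pow_eq_one_iff_of_nonneg (norm_nonneg _) two_ne_zero, EuclideanSpace.norm_sq_eq]
    exact h.symm
  rw [star_eq_conjTranspose, re_dotProduct_conjTranspose_mul_self_mulVec,
    re_dotProduct_conjTranspose_mul_self_mulVec, re_trace_conjTranspose_mul_self,
    ← Finset.sum_add_distrib, Finset.mul_sum]
  refine Finset.sum_le_sum fun i _ => ?_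
  have := norm_inner_sq_add_norm_inner_sq_le (𝕜 := 𝕜) (hnorm ha) (hnorm hb)
    (WithLp.toLp 2 (star (B i)))
  rwa [norm_inner_symm (𝕜 := 𝕜) (WithLp.toLp 2 a), norm_inner_symm (𝕜 := 𝕜) (WithLp.toLp 2 b),
    EuclideanSpace.inner_toLp_toLp a b, dotProduct_comm] at this

variable [DecidableEq n]

theorem sum_star_dotProduct_mulVec_eq_trace {a : n → n → 𝕜}
    (ha : ∀ m m', star (a m) ⬝ᵥ a m' = if m = m' then 1 else 0) (ρ : Matrix n n 𝕜) :
    ∑ m, star (a m) ⬝ᵥ ρ *ᵥ a m = ρ.trace := by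
  let A : Matrix n n 𝕜 := of fun i m => a m i
  have hA : Aᴴ * A = 1 := by
    ext m m'
    simpa [A, mul_apply, dotProduct, one_apply] using ha m m'
  calc ∑ m, star (a m) ⬝ᵥ ρ *ᵥ a m = (Aᴴ * (ρ * A)).trace := by
        refine Finset.sum_congr rfl fun m _ => ?_
        simp [A, mul_apply, dotProduct, mulVec, Finset.mul_sum]
    _ = ρ.trace := by rw [trace_mul_comm, mul_assoc, mul_eq_one_comm.mp hA, mul_one]

end Matrix

section MinEntropy

variable {ι κ : Type*} [Fintype ι] [Fintype κ]

theorem exists_pos_eq_ciSup_of_sum_eq_one {v : ι → ℝ} (hv : ∑ i, v i = 1) :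
    ∃ i, 0 < v i ∧ ⨆ j, v j = v i := by
  have : Nonempty ι := by
    by_contra h
    simp [not_nonempty_iff.mp h] at hv
  obtain ⟨i, hi⟩ := exists_eq_ciSup_of_finite (f := v)
  refine ⟨i, ?_, hi.symm⟩
  by_contra! h
  have : ∑ j, v j ≤ 0 := Finset.sum_nonpos fun j _ =>
    (le_ciSup (Set.finite_range v).bddAbove j).trans (hi ▸ h)
  linarith

theorem neg_logb_le_minEntropy_add_minEntropy {v : ι → ℝ} {w : κ → ℝ}
    (hv : ∑ i, v i = 1) (hw : ∑ j, w j = 1) {K : ℝ} (hK : ∀ i j, v i * w j ≤ K) :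
    -Real.logb 2 K ≤ minEntropy v + minEntropy w := by
  obtain ⟨i, hi, hvi⟩ := exists_pos_eq_ciSup_of_sum_eq_one hv
  obtain ⟨j, hj, hwj⟩ := exists_pos_eq_ciSup_of_sum_eq_one hw
  have hlog : Real.logb 2 (v i * w j) ≤ Real.logb 2 K :=
    Real.logb_le_logb_of_le one_lt_two (by positivity) (hK i j)
  rw [Real.logb_mul hi.ne' hj.ne'] at hlog
  simp only [minEntropy, hvi, hwj]
  linarith

end MinEntropy

theorem stmt_19_general (d : ℕ) (a b : Fin d → (Fin d → ℂ))
    (ha : ∀ m m', star (a m) ⬝ᵥ a m' = if m = m' then 1 else 0)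
    (hb : ∀ n n', star (b n) ⬝ᵥ b n' = if n = n' then 1 else 0)
    (c : ℝ) (hc : IsGreatest {x : ℝ | ∃ m n, x = ‖star (a m) ⬝ᵥ b n‖} c)
    (ρ : Matrix (Fin d) (Fin d) ℂ) (hρ : ρ.PosSemidef) (hρ1 : ρ.trace = 1) :
    (∀ m n, (star (a m) ⬝ᵥ ρ.mulVec (a m)).re * (star (b n) ⬝ᵥ ρ.mulVec (b n)).re ≤
        (1 / 4) * (1 + c) ^ 2) ∧
    minEntropy (fun m => (star (a m) ⬝ᵥ ρ.mulVec (a m)).re) +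
        minEntropy (fun n => (star (b n) ⬝ᵥ ρ.mulVec (b n)).re) ≥
      -2 * Real.logb 2 ((1 + c) / 2) := by
  set p := fun m => (star (a m) ⬝ᵥ ρ.mulVec (a m)).re
  set q := fun n => (star (b n) ⬝ᵥ ρ.mulVec (b n)).re
  have hsum_le (m n) : p m + q n ≤ 1 + c := by
    have h := hρ.re_dotProduct_mulVec_add_le (by simpa using ha m m) (by simpa using hb n n)
    rw [hρ1, RCLike.one_re, mul_one] at h
    simp only [RCLike.re_to_complex] at h
    linarith [hc.2 ⟨m, n, rfl⟩]
  have hprod_le (m n) : p m * q n ≤ (1 / 4) * (1 + c) ^ 2 := by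
    have hp : 0 ≤ p m := hρ.re_dotProduct_nonneg (a m)
    have hq : 0 ≤ q n := hρ.re_dotProduct_nonneg (b n)
    nlinarith [hsum_le m n, sq_nonneg (p m - q n)]
  have hsum_one {e : Fin d → Fin d → ℂ}
      (he : ∀ m m', star (e m) ⬝ᵥ e m' = if m = m' then 1 else 0) :
      ∑ m, (star (e m) ⬝ᵥ ρ.mulVec (e m)).re = 1 := by
    rw [← Complex.re_sum, sum_star_dotProduct_mulVec_eq_trace he, hρ1, Complex.one_re]
  refine ⟨hprod_le, ?_⟩
  have h := neg_logb_le_minEntropy_add_minEntropy (hsum_one ha) (hsum_one hb) hprod_le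
  rwa [show (1 / 4) * (1 + c) ^ 2 = ((1 + c) / 2) ^ 2 by ring, Real.logb_pow, Nat.cast_ofNat,
    ← neg_mul] at h

/-- Let `{a m}`, `{b n}` be orthonormal bases of `ℂ^d` with maximum
overlap `c`, and let `p, q` be the probability vectors induced by a density matrix
`ρ`.  Then every entry of `p⊗q` is at most `(1/4)(1+c)²`, and consequently
`H_∞(p) + H_∞(q) ≥ −2 log₂((1+c)/2)` (the Maassen–Uffink bound for min-entropy). -/
theorem stmt_19 (d : ℕ) (hd : 0 < d) (a b : Fin d → (Fin d → ℂ))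
    (ha : ∀ m m', star (a m) ⬝ᵥ a m' = if m = m' then 1 else 0)
    (hb : ∀ n n', star (b n) ⬝ᵥ b n' = if n = n' then 1 else 0)
    (c : ℝ) (hc : IsGreatest {x : ℝ | ∃ m n, x = ‖star (a m) ⬝ᵥ b n‖} c)
    (ρ : Matrix (Fin d) (Fin d) ℂ) (hρ : ρ.PosSemidef) (hρ1 : ρ.trace = 1) :
    (∀ m n, (star (a m) ⬝ᵥ ρ.mulVec (a m)).re * (star (b n) ⬝ᵥ ρ.mulVec (b n)).re ≤
        (1 / 4) * (1 + c) ^ 2) ∧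
    minEntropy (fun m => (star (a m) ⬝ᵥ ρ.mulVec (a m)).re) +
        minEntropy (fun n => (star (b n) ⬝ᵥ ρ.mulVec (b n)).re) ≥
      -2 * Real.logb 2 ((1 + c) / 2) :=
  stmt_19_general d a b ha hb c hc ρ hρ hρ1
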